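/- arXiv:1905.02383 — 3 statements merged into one kernel-verified Lean document; each statement's English description precedes it below -/
import Mathlib

section
/- For any post-processing (Markov kernel) Proc and any pair of distributions P, Q, the trade-off function satisfies T(Proc(P), Proc(Q))(α) ≥ T(P,Q)(α) for all α ∈ [0,1]. -/
open MeasureTheory ProbabilityTheory Set

noncomputable def tradeoff {Ω : Type*} [MeasurableSpace Ω] (P Q : Measure Ω) (α : ℝ) : ℝ :=
  sInf { β : ℝ | ∃ φ : Ω → ℝ, Measurable φ ∧ (∀ ω, φ ω ∈ Icc (0:ℝ) 1) ∧
    (∫ ω, φ ω ∂P) ≤ α ∧ β = 1 - ∫ ω, φ ω ∂Q }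

lemma aux_int_le_one {Ω : Type*} [MeasurableSpace Ω] (μ : Measure Ω) [IsProbabilityMeasure μ]
    {φ : Ω → ℝ} (hm : Measurable φ) (hb : ∀ ω, φ ω ∈ Icc (0:ℝ) 1) :
    (∫ ω, φ ω ∂μ) ≤ 1 := by
  have hint : Integrable φ μ := by
    refine (integrable_const (1:ℝ)).mono' hm.aestronglyMeasurable ?_
    filter_upwards with ω
    rw [Real.norm_eq_abs, abs_le]
    exact ⟨by linarith [(hb ω).1], (hb ω).2⟩
  calc (∫ ω, φ ω ∂μ) ≤ ∫ _, (1:ℝ) ∂μ :=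
        integral_mono hint (integrable_const 1) fun ω => (hb ω).2
    _ = 1 := by simp

lemma aux_lint_le_one {Ω : Type*} [MeasurableSpace Ω] (μ : Measure Ω) [IsProbabilityMeasure μ]
    {φ : Ω → ℝ} (hb : ∀ ω, φ ω ∈ Icc (0:ℝ) 1) :
    (∫⁻ ω, ENNReal.ofReal (φ ω) ∂μ) ≤ 1 := by
  calc (∫⁻ ω, ENNReal.ofReal (φ ω) ∂μ) ≤ ∫⁻ _, 1 ∂μ :=
        lintegral_mono fun ω => ENNReal.ofReal_le_one.mpr (hb ω).2
    _ = 1 := by simp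

/-- Post-processing by a Markov kernel can only increase the trade-off function:
`T(Proc(P), Proc(Q))(α) ≥ T(P,Q)(α)` for all `α ∈ [0,1]`. -/
theorem statement5 {Y Z : Type*} [MeasurableSpace Y] [MeasurableSpace Z]
    (P Q : Measure Y) [IsProbabilityMeasure P] [IsProbabilityMeasure Q]
    (Proc : Kernel Y Z) [IsMarkovKernel Proc] :
    ∀ α ∈ Icc (0:ℝ) 1,
      tradeoff P Q α ≤ tradeoff (P.bind fun y => Proc y) (Q.bind fun y => Proc y) α := by
  intro α hα
  have hbP : IsProbabilityMeasure (P.bind fun y => Proc y) := by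
    constructor
    rw [Measure.bind_apply MeasurableSet.univ (Proc.measurable.aemeasurable)]
    simp
  have hbQ : IsProbabilityMeasure (Q.bind fun y => Proc y) := by
    constructor
    rw [Measure.bind_apply MeasurableSet.univ (Proc.measurable.aemeasurable)]
    simp
  -- lower bound 0 for the P,Q set
  have hbdd : BddBelow { β : ℝ | ∃ φ : Y → ℝ, Measurable φ ∧ (∀ ω, φ ω ∈ Icc (0:ℝ) 1) ∧
      (∫ ω, φ ω ∂P) ≤ α ∧ β = 1 - ∫ ω, φ ω ∂Q } := by
    refine ⟨0, ?_⟩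
    rintro β ⟨φ, hm, hb, -, rfl⟩
    have := aux_int_le_one Q hm hb
    linarith
  unfold tradeoff
  refine le_csInf ?_ ?_
  · exact ⟨1, fun _ => 0, measurable_const, fun ω => ⟨le_refl 0, zero_le_one⟩,
      by simpa using hα.1, by simp⟩
  · rintro β ⟨φ, hm, hb, hP, rfl⟩
    -- pull back the test through the kernel
    set ψ : Y → ℝ := fun y => (∫⁻ z, ENNReal.ofReal (φ z) ∂Proc y).toReal with hψdef
    have hψm : Measurable ψ :=
      (Measurable.lintegral_kernel (ENNReal.measurable_ofReal.comp hm)).ennreal_toReal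
    have hψb : ∀ y, ψ y ∈ Icc (0:ℝ) 1 := by
      intro y
      refine ⟨ENNReal.toReal_nonneg, ?_⟩
      have h1 : (∫⁻ z, ENNReal.ofReal (φ z) ∂Proc y) ≤ 1 := aux_lint_le_one (Proc y) hb
      have := ENNReal.toReal_mono (show (1:ENNReal) ≠ ⊤ by simp) h1
      simpa using this
    have hψne : ∀ y, (∫⁻ z, ENNReal.ofReal (φ z) ∂Proc y) ≠ ⊤ :=
      fun y => ((aux_lint_le_one (Proc y) hb).trans_lt ENNReal.one_lt_top).ne
    -- key identity: ∫ ψ ∂μ = ∫ φ ∂(μ.bind Proc) for probability μ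
    have key : ∀ (μ : Measure Y), IsProbabilityMeasure μ →
        (∫ y, ψ y ∂μ) = ∫ z, φ z ∂(μ.bind fun y => Proc y) := by
      intro μ hμ
      have hbμ : IsProbabilityMeasure (μ.bind fun y => Proc y) := by
        constructor
        rw [Measure.bind_apply MeasurableSet.univ (Proc.measurable.aemeasurable)]
        simp
      rw [integral_eq_lintegral_of_nonneg_ae (ae_of_all _ fun y => (hψb y).1)
        hψm.aestronglyMeasurable,
        integral_eq_lintegral_of_nonneg_ae (ae_of_all _ fun z => (hb z).1)
        hm.aestronglyMeasurable,
        Measure.lintegral_bind Proc.measurable.aemeasurable hm.ennreal_ofReal.aemeasurable]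
      congr 1
      refine lintegral_congr fun y => ?_
      exact ENNReal.ofReal_toReal (hψne y)
    have hψP : (∫ y, ψ y ∂P) ≤ α := by rw [key P ‹_›]; exact hP
    have hψQ : (∫ y, ψ y ∂Q) = ∫ z, φ z ∂(Q.bind fun y => Proc y) := key Q ‹_›
    refine csInf_le hbdd ?_
    exact ⟨ψ, hψm, hψb, hψP, by rw [hψQ]⟩
end

section
/- If a mechanism M is f-DP (i.e., T(M(S),M(S')) ≥ f for all neighboring datasets), then M is also f^S-DP where f^S = max{f, f⁻¹}, and f^S is a symmetric trade-off function satisfying f^S = (f^S)⁻¹. -/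
open MeasureTheory ProbabilityTheory Set

/-- The left-continuous inverse `f⁻¹(α) = inf{t ∈ [0,1] : f(t) ≤ α}`. -/
noncomputable def tfInv (f : ℝ → ℝ) (α : ℝ) : ℝ :=
  sInf {t : ℝ | t ∈ Icc (0:ℝ) 1 ∧ f t ≤ α}

open Filter Topology


section aux
variable {f : ℝ → ℝ}

lemma tfInv_bddBelow (α : ℝ) : BddBelow {t : ℝ | t ∈ Icc (0:ℝ) 1 ∧ f t ≤ α} :=
  ⟨0, fun t ht => ht.1.1⟩

lemma tfInv_nonempty (hf1 : f 1 = 0) {α : ℝ} (hα : 0 ≤ α) :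
    ((1:ℝ)) ∈ {t : ℝ | t ∈ Icc (0:ℝ) 1 ∧ f t ≤ α} :=
  ⟨⟨zero_le_one, le_rfl⟩, by rw [hf1]; exact hα⟩

lemma tfInv_le (hf1 : f 1 = 0) {t α : ℝ} (ht : t ∈ Icc (0:ℝ) 1) (hft : f t ≤ α) :
    tfInv f α ≤ t :=
  csInf_le (tfInv_bddBelow α) ⟨ht, hft⟩

lemma le_tfInv (hf1 : f 1 = 0) {α c : ℝ} (hα : 0 ≤ α)
    (h : ∀ t ∈ Icc (0:ℝ) 1, f t ≤ α → c ≤ t) : c ≤ tfInv f α :=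
  le_csInf ⟨1, tfInv_nonempty hf1 hα⟩ (fun t ht => h t ht.1 ht.2)

lemma tfInv_spec (hcont : ContinuousOn f (Icc (0:ℝ) 1)) (hf1 : f 1 = 0)
    {α : ℝ} (hα : 0 ≤ α) : tfInv f α ∈ Icc (0:ℝ) 1 ∧ f (tfInv f α) ≤ α := by
  have hset : {t : ℝ | t ∈ Icc (0:ℝ) 1 ∧ f t ≤ α} = Icc (0:ℝ) 1 ∩ f ⁻¹' (Iic α) := by
    ext t; constructor
    · rintro ⟨h1, h2⟩; exact ⟨h1, h2⟩
    · rintro ⟨h1, h2⟩; exact ⟨h1, h2⟩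
  have hcl : IsClosed {t : ℝ | t ∈ Icc (0:ℝ) 1 ∧ f t ≤ α} := by
    rw [hset]
    exact hcont.preimage_isClosed_of_isClosed isClosed_Icc isClosed_Iic
  have hcp : IsCompact {t : ℝ | t ∈ Icc (0:ℝ) 1 ∧ f t ≤ α} :=
    (isCompact_Icc (a := (0:ℝ)) (b := 1)).of_isClosed_subset hcl (fun t ht => ht.1)
  have := hcp.sInf_mem ⟨1, tfInv_nonempty hf1 hα⟩
  exact ⟨this.1, this.2⟩

lemma tfInv_anti (hf1 : f 1 = 0) {α β : ℝ} (hα : 0 ≤ α) (hαβ : α ≤ β) :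
    tfInv f β ≤ tfInv f α :=
  csInf_le_csInf (tfInv_bddBelow β) ⟨1, tfInv_nonempty hf1 hα⟩
    (fun t ht => ⟨ht.1, ht.2.trans hαβ⟩)

end aux

section aux2
variable {f : ℝ → ℝ}

lemma tfInv_le_one_sub (hf1 : f 1 = 0) (hle : ∀ x ∈ Icc (0:ℝ) 1, f x ≤ 1 - x)
    {α : ℝ} (hα : α ∈ Icc (0:ℝ) 1) : tfInv f α ≤ 1 - α := by
  refine tfInv_le hf1 ⟨by linarith [hα.2], by linarith [hα.1]⟩ ?_
  have := hle (1 - α) ⟨by linarith [hα.2], by linarith [hα.1]⟩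
  linarith

lemma tfInv_convex (hconv : ConvexOn ℝ (Icc (0:ℝ) 1) f)
    (hcont : ContinuousOn f (Icc (0:ℝ) 1)) (hf1 : f 1 = 0) :
    ConvexOn ℝ (Icc (0:ℝ) 1) (tfInv f) := by
  refine ⟨convex_Icc 0 1, fun x hx y hy a b ha hb hab => ?_⟩
  have hgx := tfInv_spec hcont hf1 hx.1
  have hgy := tfInv_spec hcont hf1 hy.1
  have hmem : a • tfInv f x + b • tfInv f y ∈ Icc (0:ℝ) 1 :=
    (convex_Icc (0:ℝ) 1) hgx.1 hgy.1 ha hb hab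
  refine tfInv_le hf1 hmem ?_
  calc f (a • tfInv f x + b • tfInv f y) ≤ a • f (tfInv f x) + b • f (tfInv f y) :=
        hconv.2 hgx.1 hgy.1 ha hb hab
    _ ≤ a • x + b • y := by
        simp only [smul_eq_mul]
        have := hgx.2; have := hgy.2; nlinarith

/-- key inversion fact: if `tfInv f t ≤ α` then `f α ≤ t`. -/
lemma f_le_of_tfInv_le (hcont : ContinuousOn f (Icc (0:ℝ) 1))
    (hanti : AntitoneOn f (Icc (0:ℝ) 1)) (hf1 : f 1 = 0)
    {α t : ℝ} (hα : α ∈ Icc (0:ℝ) 1) (ht : 0 ≤ t) (h : tfInv f t ≤ α) : f α ≤ t := by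
  rcases eq_or_lt_of_le hα.2 with h1 | h1
  · rw [h1, hf1]; exact ht
  · -- for every α' ∈ Ioc α 1, f α' ≤ t
    have key : ∀ α' ∈ Ioc α 1, f α' ≤ t := by
      intro α' hα'
      obtain ⟨s, hs, hsα'⟩ := exists_lt_of_csInf_lt ⟨1, tfInv_nonempty hf1 ht⟩
        (lt_of_le_of_lt h hα'.1)
      have hα'mem : α' ∈ Icc (0:ℝ) 1 := ⟨le_trans hα.1 (le_of_lt hα'.1), hα'.2⟩
      exact le_trans (hanti hs.1 hα'mem (le_of_lt hsα')) hs.2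
    have hcw : ContinuousWithinAt f (Ioc α 1) α :=
      (hcont.continuousWithinAt hα).mono (fun x hx => ⟨le_trans hα.1 (le_of_lt hx.1), hx.2⟩)
    have hne : (𝓝[Ioc α 1] α).NeBot := by
      rw [← mem_closure_iff_nhdsWithin_neBot, closure_Ioc (ne_of_lt h1)]
      exact ⟨le_rfl, le_of_lt h1⟩
    exact le_of_tendsto hcw (eventually_mem_nhdsWithin.mono key)

end aux2

section aux3
variable {f : ℝ → ℝ}

lemma tfInv_cwa_right (hcont : ContinuousOn f (Icc (0:ℝ) 1))
    (hanti : AntitoneOn f (Icc (0:ℝ) 1)) (hf1 : f 1 = 0)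
    {x : ℝ} (hx : x ∈ Icc (0:ℝ) 1) : ContinuousWithinAt (tfInv f) (Icc x 1) x := by
  rw [Metric.continuousWithinAt_iff]
  intro ε hε
  by_cases hc : tfInv f x < ε
  · refine ⟨1, one_pos, fun y hy _ => ?_⟩
    have h1 : tfInv f y ≤ tfInv f x := tfInv_anti hf1 hx.1 hy.1
    have h2 : 0 ≤ tfInv f y := (tfInv_spec hcont hf1 (le_trans hx.1 hy.1)).1.1
    rw [Real.dist_eq, abs_sub_lt_iff]
    constructor <;> linarith
  · push_neg at hc
    set t := tfInv f x - ε / 2 with htdef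
    clear_value t
    have hgx := tfInv_spec hcont hf1 hx.1
    have htmem : t ∈ Icc (0:ℝ) 1 := ⟨by linarith [hgx.1.1], by linarith [hgx.1.2]⟩
    have hft : x < f t := by
      by_contra hcon
      push_neg at hcon
      have := tfInv_le hf1 htmem hcon
      linarith
    refine ⟨f t - x, by linarith, fun y hy hd => ?_⟩
    rw [Real.dist_eq] at hd
    have hyx : y < f t := by
      rcases abs_sub_lt_iff.1 hd with ⟨h1, _⟩
      linarith
    have hty : t ≤ tfInv f y := by
      refine le_tfInv hf1 (le_trans hx.1 hy.1) (fun s hs hfs => ?_)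
      by_contra hcon
      push_neg at hcon
      have := hanti hs htmem (le_of_lt hcon)
      linarith
    have h1 : tfInv f y ≤ tfInv f x := tfInv_anti hf1 hx.1 hy.1
    rw [Real.dist_eq, abs_sub_lt_iff]
    constructor <;> [linarith; linarith]

lemma tfInv_cwa_left (hconv : ConvexOn ℝ (Icc (0:ℝ) 1) f)
    (hcont : ContinuousOn f (Icc (0:ℝ) 1)) (hf1 : f 1 = 0)
    {x : ℝ} (hx : x ∈ Icc (0:ℝ) 1) : ContinuousWithinAt (tfInv f) (Icc 0 x) x := by
  rcases eq_or_lt_of_le hx.1 with h0 | h0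
  · rw [← h0]
    simp only [Icc_self]
    exact continuousWithinAt_singleton
  · -- squeeze between g x and the chord through (0, g 0) and (x, g x)
    have hupper : ∀ y ∈ Icc (0:ℝ) x, tfInv f y ≤ ((x - y) / x) * tfInv f 0 + (y / x) * tfInv f x := by
      intro y hy
      have ha : (0:ℝ) ≤ (x - y) / x := div_nonneg (by linarith [hy.2]) (le_of_lt h0)
      have hb : (0:ℝ) ≤ y / x := div_nonneg hy.1 (le_of_lt h0)
      have hab : (x - y) / x + y / x = 1 := by field_simp; ring
      have h0mem : (0:ℝ) ∈ Icc (0:ℝ) 1 := ⟨le_rfl, zero_le_one⟩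
      have := (tfInv_convex hconv hcont hf1).2 h0mem hx ha hb hab
      have hyeq : ((x - y) / x) • (0:ℝ) + (y / x) • x = y := by
        simp only [smul_eq_mul]; field_simp; ring
      rw [hyeq] at this
      simpa using this
    have hlower : ∀ y ∈ Icc (0:ℝ) x, tfInv f x ≤ tfInv f y :=
      fun y hy => tfInv_anti hf1 hy.1 hy.2
    have hub : Tendsto (fun y => ((x - y) / x) * tfInv f 0 + (y / x) * tfInv f x)
        (𝓝[Icc 0 x] x) (𝓝 (tfInv f x)) := by
      have : Tendsto (fun y => ((x - y) / x) * tfInv f 0 + (y / x) * tfInv f x)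
          (𝓝 x) (𝓝 (((x - x) / x) * tfInv f 0 + (x / x) * tfInv f x)) := by
        have hc : Continuous fun y : ℝ => ((x - y) / x) * tfInv f 0 + (y / x) * tfInv f x := by
          continuity
        exact hc.tendsto x
      rw [show ((x - x) / x) * tfInv f 0 + (x / x) * tfInv f x = tfInv f x by
        field_simp; ring] at this
      exact this.mono_left nhdsWithin_le_nhds
    refine tendsto_of_tendsto_of_tendsto_of_le_of_le' tendsto_const_nhds hub ?_ ?_
    · exact eventually_mem_nhdsWithin.mono hlower
    · exact eventually_mem_nhdsWithin.mono hupper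

lemma tfInv_continuousOn (hconv : ConvexOn ℝ (Icc (0:ℝ) 1) f)
    (hcont : ContinuousOn f (Icc (0:ℝ) 1))
    (hanti : AntitoneOn f (Icc (0:ℝ) 1)) (hf1 : f 1 = 0) :
    ContinuousOn (tfInv f) (Icc (0:ℝ) 1) := by
  intro x hx
  have h := (tfInv_cwa_left hconv hcont hf1 hx).union (tfInv_cwa_right hcont hanti hf1 hx)
  refine h.mono (fun y hy => ?_)
  rcases le_total y x with h1 | h1
  · exact Or.inl ⟨hy.1, h1⟩
  · exact Or.inr ⟨h1, hy.2⟩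

end aux3

section aux4
variable {f : ℝ → ℝ}

lemma f_mem_Icc (hle : ∀ x ∈ Icc (0:ℝ) 1, f x ≤ 1 - x) (hnn : ∀ x ∈ Icc (0:ℝ) 1, 0 ≤ f x)
    {α : ℝ} (hα : α ∈ Icc (0:ℝ) 1) : f α ∈ Icc (0:ℝ) 1 :=
  ⟨hnn α hα, (hle α hα).trans (by linarith [hα.1])⟩

lemma tfInv_max_self (hconv : ConvexOn ℝ (Icc (0:ℝ) 1) f)
    (hcont : ContinuousOn f (Icc (0:ℝ) 1)) (hanti : AntitoneOn f (Icc (0:ℝ) 1))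
    (hle : ∀ x ∈ Icc (0:ℝ) 1, f x ≤ 1 - x) (hnn : ∀ x ∈ Icc (0:ℝ) 1, 0 ≤ f x)
    (hf1 : f 1 = 0) {α : ℝ} (hα : α ∈ Icc (0:ℝ) 1) :
    tfInv (fun x => max (f x) (tfInv f x)) α = max (f α) (tfInv f α) := by
  set g : ℝ → ℝ := fun x => max (f x) (tfInv f x) with hgdef
  have hinv1 : tfInv f 1 = 0 := le_antisymm
    (by simpa using tfInv_le_one_sub hf1 hle ⟨zero_le_one, le_rfl⟩)
    (tfInv_spec hcont hf1 zero_le_one).1.1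
  have hg1 : g 1 = 0 := by simp [hgdef, hf1, hinv1]
  have hspecα := tfInv_spec hcont hf1 hα.1
  have hgαmem : g α ∈ Icc (0:ℝ) 1 :=
    ⟨le_trans (f_mem_Icc hle hnn hα).1 (le_max_left _ _),
     max_le (f_mem_Icc hle hnn hα).2 hspecα.1.2⟩
  apply le_antisymm
  · -- tfInv g α ≤ g α
    refine tfInv_le (f := g) hg1 hgαmem ?_
    refine max_le ?_ ?_
    · exact le_trans (hanti hspecα.1 hgαmem (le_max_right _ _)) hspecα.2
    · exact le_trans (tfInv_anti hf1 (f_mem_Icc hle hnn hα).1 (le_max_left _ _))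
        (tfInv_le hf1 hα le_rfl)
  · -- g α ≤ tfInv g α
    refine le_tfInv (f := g) hg1 hα.1 (fun t ht hgt => ?_)
    rcases max_le_iff.1 hgt with ⟨hft, hit⟩
    exact max_le (f_le_of_tfInv_le hcont hanti hf1 hα ht.1 hit) (tfInv_le hf1 ht hft)

end aux4

section aux5
variable {Ω : Type*} [MeasurableSpace Ω]

lemma integral_facts (Q : Measure Ω) [IsProbabilityMeasure Q] {φ : Ω → ℝ}
    (hm : Measurable φ) (hb : ∀ ω, φ ω ∈ Icc (0:ℝ) 1) :
    Integrable φ Q ∧ (∫ ω, φ ω ∂Q) ∈ Icc (0:ℝ) 1 := by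
  have hint : Integrable φ Q := ⟨hm.aestronglyMeasurable,
    HasFiniteIntegral.of_bounded (C := 1) (Filter.Eventually.of_forall fun ω => by
      rw [Real.norm_eq_abs, abs_le]
      exact ⟨by linarith [(hb ω).1], (hb ω).2⟩)⟩
  refine ⟨hint, integral_nonneg (fun ω => (hb ω).1), ?_⟩
  calc ∫ ω, φ ω ∂Q ≤ ∫ _, (1:ℝ) ∂Q :=
        integral_mono hint (integrable_const 1) (fun ω => (hb ω).2)
    _ = 1 := by simp

lemma tradeoff_bddBelow (P Q : Measure Ω) [IsProbabilityMeasure Q] (α : ℝ) :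
    BddBelow { β : ℝ | ∃ φ : Ω → ℝ, Measurable φ ∧ (∀ ω, φ ω ∈ Icc (0:ℝ) 1) ∧
      (∫ ω, φ ω ∂P) ≤ α ∧ β = 1 - ∫ ω, φ ω ∂Q } := by
  refine ⟨0, ?_⟩
  rintro β ⟨φ, hm, hb, -, rfl⟩
  linarith [((integral_facts Q hm hb).2.2 : (∫ ω, φ ω ∂Q) ≤ 1)]

lemma tradeoff_nonempty (P Q : Measure Ω) {α : ℝ} (hα : 0 ≤ α) :
    (1:ℝ) ∈ { β : ℝ | ∃ φ : Ω → ℝ, Measurable φ ∧ (∀ ω, φ ω ∈ Icc (0:ℝ) 1) ∧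
      (∫ ω, φ ω ∂P) ≤ α ∧ β = 1 - ∫ ω, φ ω ∂Q } := by
  refine ⟨fun _ => 0, measurable_const, fun ω => ⟨le_rfl, zero_le_one⟩, ?_, ?_⟩ <;> simp [hα]

lemma tfInv_le_tradeoff {f : ℝ → ℝ} (hf1 : f 1 = 0)
    (P Q : Measure Ω) [IsProbabilityMeasure P] [IsProbabilityMeasure Q]
    (h1 : ∀ t ∈ Icc (0:ℝ) 1, f t ≤ tradeoff Q P t) {α : ℝ} (hα : α ∈ Icc (0:ℝ) 1) :
    tfInv f α ≤ tradeoff P Q α := by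
  refine le_csInf ⟨1, tradeoff_nonempty P Q hα.1⟩ ?_
  rintro β ⟨φ, hm, hb, hφα, rfl⟩
  obtain ⟨hintP, hmemP⟩ := integral_facts P hm hb
  obtain ⟨hintQ, hmemQ⟩ := integral_facts Q hm hb
  have ht : 1 - ∫ ω, φ ω ∂Q ∈ Icc (0:ℝ) 1 := ⟨by linarith [hmemQ.2], by linarith [hmemQ.1]⟩
  refine tfInv_le hf1 ht ?_
  refine le_trans (h1 _ ht) ?_
  have hψm : Measurable (fun ω => 1 - φ ω) := measurable_const.sub hm
  have hψb : ∀ ω, (1 - φ ω) ∈ Icc (0:ℝ) 1 := fun ω => ⟨by linarith [(hb ω).2], by linarith [(hb ω).1]⟩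
  have hsubQ : (∫ ω, (1 - φ ω) ∂Q) = 1 - ∫ ω, φ ω ∂Q := by
    rw [integral_sub (integrable_const 1) hintQ]; simp
  have hsubP : (∫ ω, (1 - φ ω) ∂P) = 1 - ∫ ω, φ ω ∂P := by
    rw [integral_sub (integrable_const 1) hintP]; simp
  have hel : (1 - ∫ ω, (1 - φ ω) ∂P) ∈ { β : ℝ | ∃ ψ : Ω → ℝ, Measurable ψ ∧
      (∀ ω, ψ ω ∈ Icc (0:ℝ) 1) ∧ (∫ ω, ψ ω ∂Q) ≤ 1 - ∫ ω, φ ω ∂Q ∧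
      β = 1 - ∫ ω, ψ ω ∂P } :=
    ⟨fun ω => 1 - φ ω, hψm, hψb, le_of_eq hsubQ, rfl⟩
  have := csInf_le (tradeoff_bddBelow Q P (1 - ∫ ω, φ ω ∂Q)) hel
  rw [hsubP] at this
  calc tradeoff Q P (1 - ∫ ω, φ ω ∂Q) ≤ 1 - (1 - ∫ ω, φ ω ∂P) := this
    _ ≤ α := by linarith
end aux5

/-- If `M` is `f`-DP then `M` is `f^S`-DP where `f^S = max{f, f⁻¹}`; moreover `f^S` is a
symmetric trade-off function, i.e. it is convex, continuous, non-increasing, below `1 - x`,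
and satisfies `f^S = (f^S)⁻¹`. -/
theorem statement8 {X Ω : Type*} [MeasurableSpace Ω] (Neighbor : X → X → Prop)
    (hN : Symmetric Neighbor) (M : X → Measure Ω) (hM : ∀ S, IsProbabilityMeasure (M S))
    (f : ℝ → ℝ)
    (hconv : ConvexOn ℝ (Icc (0:ℝ) 1) f) (hcont : ContinuousOn f (Icc (0:ℝ) 1))
    (hanti : AntitoneOn f (Icc (0:ℝ) 1)) (hle : ∀ x ∈ Icc (0:ℝ) 1, f x ≤ 1 - x)
    (hnn : ∀ x ∈ Icc (0:ℝ) 1, 0 ≤ f x)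
    (hfDP : ∀ S S', Neighbor S S' → ∀ α ∈ Icc (0:ℝ) 1, f α ≤ tradeoff (M S) (M S') α) :
    (∀ S S', Neighbor S S' → ∀ α ∈ Icc (0:ℝ) 1,
        max (f α) (tfInv f α) ≤ tradeoff (M S) (M S') α) ∧
    ConvexOn ℝ (Icc (0:ℝ) 1) (fun α => max (f α) (tfInv f α)) ∧
    ContinuousOn (fun α => max (f α) (tfInv f α)) (Icc (0:ℝ) 1) ∧
    AntitoneOn (fun α => max (f α) (tfInv f α)) (Icc (0:ℝ) 1) ∧
    (∀ x ∈ Icc (0:ℝ) 1, max (f x) (tfInv f x) ≤ 1 - x) ∧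
    (∀ α ∈ Icc (0:ℝ) 1, tfInv (fun x => max (f x) (tfInv f x)) α = max (f α) (tfInv f α)) := by
  have hf1 : f 1 = 0 := le_antisymm (by simpa using hle 1 ⟨zero_le_one, le_rfl⟩)
    (hnn 1 ⟨zero_le_one, le_rfl⟩)
  refine ⟨?_, ?_, ?_, ?_, ?_, ?_⟩
  · intro S S' h α hα
    haveI := hM S; haveI := hM S'
    refine max_le (hfDP S S' h α hα) ?_
    exact tfInv_le_tradeoff hf1 (M S) (M S') (fun t ht => hfDP S' S (hN h) t ht) hα
  · exact hconv.sup (tfInv_convex hconv hcont hf1)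
  · exact hcont.sup (tfInv_continuousOn hconv hcont hanti hf1)
  · intro x hx y hy hxy
    exact max_le_max (hanti hx hy hxy) (tfInv_anti hf1 hx.1 hxy)
  · intro x hx
    exact max_le (hle x hx) (tfInv_le_one_sub hf1 hle hx)
  · intro α hα
    exact tfInv_max_self hconv hcont hanti hle hnn hf1 hα
end

section
/- A mechanism is μ-GDP if and only if it is (ε, δ(ε))-DP for all ε ≥ 0, where δ(ε) = Φ(−ε/μ + μ/2) − e^ε Φ(−ε/μ − μ/2). -/
open MeasureTheory ProbabilityTheory Set

noncomputable def stdNormCDF (x : ℝ) : ℝ := cdf (gaussianReal 0 1) x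

noncomputable def stdNormCDFInv (p : ℝ) : ℝ := sInf {x : ℝ | p ≤ stdNormCDF x}

noncomputable def Gmu (μ α : ℝ) : ℝ :=
  if α ≤ 0 then 1 else if 1 ≤ α then 0 else stdNormCDF (stdNormCDFInv (1 - α) - μ)

section Aux
open Filter Real
local notation "G" => gaussianPDFReal 0 1




lemma G_nonneg (x : ℝ) : 0 ≤ G x := gaussianPDFReal_nonneg 0 1 x

lemma G_intOn (s : Set ℝ) : IntegrableOn G s := (integrable_gaussianPDFReal 0 1).integrableOn

lemma G_intInt (a b : ℝ) : IntervalIntegrable G volume a b :=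
  (integrable_gaussianPDFReal 0 1).intervalIntegrable

lemma Phi_eq (x : ℝ) : stdNormCDF x = ∫ t in Iic x, G t := by
  rw [stdNormCDF, cdf_eq_real, measureReal_def, gaussianReal_apply_eq_integral 0 one_ne_zero,
    ENNReal.toReal_ofReal (setIntegral_nonneg measurableSet_Iic fun t _ => G_nonneg t)]

lemma Phi_sub_Phi (a b : ℝ) : stdNormCDF b - stdNormCDF a = ∫ t in a..b, G t := by
  rw [Phi_eq, Phi_eq, intervalIntegral.integral_Iic_sub_Iic (G_intOn _) (G_intOn _)]

lemma Phi_mono : Monotone stdNormCDF := monotone_cdf _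

lemma Phi_nonneg (x : ℝ) : 0 ≤ stdNormCDF x := cdf_nonneg _ x

lemma Phi_le_one (x : ℝ) : stdNormCDF x ≤ 1 := cdf_le_one _ x

lemma Phi_continuous : Continuous stdNormCDF := by
  have h : stdNormCDF = fun x => (∫ t in (0:ℝ)..x, G t) + stdNormCDF 0 := by
    ext x; rw [← Phi_sub_Phi]; ring
  rw [h]
  exact ((intervalIntegral.continuous_primitive (fun a b => G_intInt a b) 0).add
    continuous_const)

lemma Phi_tendsto_atBot : Tendsto stdNormCDF atBot (nhds 0) := tendsto_cdf_atBot _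
lemma Phi_tendsto_atTop : Tendsto stdNormCDF atTop (nhds 1) := tendsto_cdf_atTop _

lemma G_even (x : ℝ) : G (-x) = G x := by
  simp [gaussianPDFReal]

lemma Phi_neg (x : ℝ) : stdNormCDF (-x) = 1 - stdNormCDF x := by
  have h1 : stdNormCDF (-x) = ∫ t in Ioi x, G t := by
    rw [Phi_eq]
    calc (∫ t in Iic (-x), G t) = ∫ t in Iic (-x), G (-t) :=
          setIntegral_congr_fun measurableSet_Iic fun t _ => (G_even t).symm
      _ = ∫ t in Ioi (- -x), G t := integral_comp_neg_Iic _ _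
      _ = ∫ t in Ioi x, G t := by rw [neg_neg]
  have h2 : (∫ t in Iic x, G t) + ∫ t in Ioi x, G t = 1 := by
    rw [← compl_Iic,
      integral_add_compl measurableSet_Iic (integrable_gaussianPDFReal 0 1),
      integral_gaussianPDFReal_eq_one 0 one_ne_zero]
  rw [h1, Phi_eq]; linarith



lemma Phi_inv_spec {p : ℝ} (hp0 : 0 < p) (hp1 : p < 1) :
    stdNormCDF (stdNormCDFInv p) = p := by
  obtain ⟨a, ha⟩ : ∃ a, stdNormCDF a < p := by
    have := Phi_tendsto_atBot.eventually_lt_const hp0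
    exact this.exists
  obtain ⟨b, hb⟩ : ∃ b, p < stdNormCDF b := by
    have := Phi_tendsto_atTop.eventually_const_lt hp1
    exact this.exists
  have hab : a ≤ b := by
    by_contra h
    exact absurd (Phi_mono (le_of_not_ge h)) (by linarith)
  obtain ⟨x, _, hx⟩ : ∃ x ∈ Icc a b, stdNormCDF x = p := by
    have := intermediate_value_Icc hab Phi_continuous.continuousOn
    obtain ⟨x, hx1, hx2⟩ := this ⟨ha.le, hb.le⟩
    exact ⟨x, hx1, hx2⟩
  set S := {x : ℝ | p ≤ stdNormCDF x} with hS
  have hxS : x ∈ S := by simp [hS, hx]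
  have hne : S.Nonempty := ⟨x, hxS⟩
  have hbdd : BddBelow S := by
    refine ⟨a, fun y hy => ?_⟩
    by_contra h
    exact absurd (le_trans hy (Phi_mono (le_of_not_ge h))) (not_le.mpr ha)
  have hclosed : IsClosed S := isClosed_le continuous_const Phi_continuous
  have hmem : stdNormCDFInv p ∈ S := by
    rw [show stdNormCDFInv p = sInf S from by rw [stdNormCDFInv, hS]]
    exact hclosed.csInf_mem hne hbdd
  have h1 : p ≤ stdNormCDF (stdNormCDFInv p) := hmem
  have hle : stdNormCDFInv p ≤ x := by
    rw [show stdNormCDFInv p = sInf S from by rw [stdNormCDFInv, hS]]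
    exact csInf_le hbdd hxS
  have h2 : stdNormCDF (stdNormCDFInv p) ≤ p := (Phi_mono hle).trans_eq hx
  linarith


lemma G_shift (x μ : ℝ) : G (x + μ) = Real.exp (-μ*x - μ^2/2) * G x := by
  simp only [gaussianPDFReal, sub_zero, NNReal.coe_one, mul_one]
  rw [mul_comm (Real.exp _), mul_assoc, ← Real.exp_add]
  congr 1
  ring

lemma G_shift_intInt (μ a b : ℝ) : IntervalIntegrable (fun x => G (x + μ)) volume a b :=
  ((integrable_gaussianPDFReal 0 1).comp_add_right μ).intervalIntegrable

lemma G_shift_le {μ ε x : ℝ} (hμ : 0 < μ) (hx : -(ε/μ + μ/2) ≤ x) :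
    G (x + μ) ≤ Real.exp ε * G x := by
  rw [G_shift]
  refine mul_le_mul_of_nonneg_right ?_ (G_nonneg x)
  rw [Real.exp_le_exp]
  have h : -(ε/μ) - μ/2 ≤ x := by linarith
  nlinarith [mul_le_mul_of_nonneg_left h hμ.le, mul_div_cancel₀ ε hμ.ne']

lemma le_G_shift {μ ε x : ℝ} (hμ : 0 < μ) (hx : x ≤ -(ε/μ + μ/2)) :
    Real.exp ε * G x ≤ G (x + μ) := by
  rw [G_shift]
  refine mul_le_mul_of_nonneg_right ?_ (G_nonneg x)
  rw [Real.exp_le_exp]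
  have h : x ≤ -(ε/μ) - μ/2 := by linarith
  nlinarith [mul_le_mul_of_nonneg_left h hμ.le, mul_div_cancel₀ ε hμ.ne']

lemma shift_integral (a b μ : ℝ) :
    (∫ x in a..b, G (x + μ)) = stdNormCDF (b + μ) - stdNormCDF (a + μ) := by
  rw [intervalIntegral.integral_comp_add_right, Phi_sub_Phi]

lemma key_max (μ ε t : ℝ) (hμ : 0 < μ) :
    stdNormCDF (μ - t) - Real.exp ε * stdNormCDF (-t)
      ≤ stdNormCDF (μ - (ε/μ + μ/2)) - Real.exp ε * stdNormCDF (-(ε/μ + μ/2)) := by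
  set c := ε/μ + μ/2 with hc
  rcases le_total t c with h | h
  · have hct : -c ≤ -t := neg_le_neg h
    have h1 : stdNormCDF (μ - t) - stdNormCDF (μ - c) = ∫ x in (-c)..(-t), G (x + μ) := by
      rw [shift_integral]; ring_nf
    have h2 : stdNormCDF (-t) - stdNormCDF (-c) = ∫ x in (-c)..(-t), G x := Phi_sub_Phi _ _
    have h3 : (∫ x in (-c)..(-t), G (x + μ)) ≤ ∫ x in (-c)..(-t), Real.exp ε * G x := by
      refine intervalIntegral.integral_mono_on hct (G_shift_intInt μ _ _)
        ((G_intInt _ _).const_mul _) fun x hx => G_shift_le hμ hx.1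
    rw [intervalIntegral.integral_const_mul] at h3
    rw [← h2, ← h1] at h3; linarith
  · have hct : -t ≤ -c := neg_le_neg h
    have h1 : stdNormCDF (μ - c) - stdNormCDF (μ - t) = ∫ x in (-t)..(-c), G (x + μ) := by
      rw [shift_integral]; ring_nf
    have h2 : stdNormCDF (-c) - stdNormCDF (-t) = ∫ x in (-t)..(-c), G x := Phi_sub_Phi _ _
    have h3 : (∫ x in (-t)..(-c), Real.exp ε * G x) ≤ ∫ x in (-t)..(-c), G (x + μ) := by
      refine intervalIntegral.integral_mono_on hct ((G_intInt _ _).const_mul _)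
        (G_shift_intInt μ _ _) fun x hx => le_G_shift hμ hx.2
    rw [intervalIntegral.integral_const_mul] at h3
    rw [← h2, ← h1] at h3; linarith

lemma delta_nonneg (μ ε : ℝ) (hμ : 0 < μ) :
    0 ≤ stdNormCDF (μ - (ε/μ + μ/2)) - Real.exp ε * stdNormCDF (-(ε/μ + μ/2)) := by
  have hlim : Tendsto (fun t => stdNormCDF (μ - t) - Real.exp ε * stdNormCDF (-t))
      atTop (nhds 0) := by
    have h1 : Tendsto (fun t : ℝ => μ - t) atTop atBot :=
      tendsto_atBot_add_const_left _ μ tendsto_neg_atTop_atBot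
    have h2 : Tendsto (fun t : ℝ => -t) atTop atBot := tendsto_neg_atTop_atBot
    have := (Phi_tendsto_atBot.comp h1).sub ((Phi_tendsto_atBot.comp h2).const_mul (Real.exp ε))
    simpa using this
  exact le_of_tendsto hlim (Eventually.of_forall fun t => key_max μ ε t hμ)

variable {Ω : Type*} [MeasurableSpace Ω]

lemma test_integrable (P : Measure Ω) [IsProbabilityMeasure P] {φ : Ω → ℝ}
    (hφm : Measurable φ) (hφ : ∀ ω, φ ω ∈ Icc (0:ℝ) 1) : Integrable φ P := by
  refine Integrable.mono' (integrable_const 1) hφm.aestronglyMeasurable ?_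
  refine Eventually.of_forall fun ω => ?_
  rw [Real.norm_eq_abs, abs_of_nonneg (hφ ω).1]
  exact (hφ ω).2

lemma test_integral_mem (P : Measure Ω) [IsProbabilityMeasure P] {φ : Ω → ℝ}
    (hφm : Measurable φ) (hφ : ∀ ω, φ ω ∈ Icc (0:ℝ) 1) :
    (∫ ω, φ ω ∂P) ∈ Icc (0:ℝ) 1 := by
  constructor
  · exact integral_nonneg fun ω => (hφ ω).1
  · calc (∫ ω, φ ω ∂P) ≤ ∫ _, (1:ℝ) ∂P :=
        integral_mono (test_integrable P hφm hφ) (integrable_const 1) fun ω => (hφ ω).2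
    _ = 1 := by simp

/-- Extend a `(c, δ)` set-level inequality to `[0,1]`-valued tests via layer cake. -/
lemma test_dp (P Q : Measure Ω) [IsProbabilityMeasure P] [IsProbabilityMeasure Q]
    {φ : Ω → ℝ} (hφm : Measurable φ) (hφ : ∀ ω, φ ω ∈ Icc (0:ℝ) 1)
    {c δ : ℝ} (hc : 0 ≤ c)
    (h : ∀ E : Set Ω, MeasurableSet E → (Q E).toReal ≤ c * (P E).toReal + δ) :
    (∫ ω, φ ω ∂Q) ≤ c * (∫ ω, φ ω ∂P) + δ := by
  have hQ : (∫ ω, φ ω ∂Q) = ∫ t in Ioc (0:ℝ) 1, (Q {a | t ≤ φ a}).toReal :=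
    (test_integrable Q hφm hφ).integral_eq_integral_Ioc_meas_le
      (Eventually.of_forall fun ω => (hφ ω).1) (Eventually.of_forall fun ω => (hφ ω).2)
  have hP : (∫ ω, φ ω ∂P) = ∫ t in Ioc (0:ℝ) 1, (P {a | t ≤ φ a}).toReal :=
    (test_integrable P hφm hφ).integral_eq_integral_Ioc_meas_le
      (Eventually.of_forall fun ω => (hφ ω).1) (Eventually.of_forall fun ω => (hφ ω).2)
  have measQ : Measurable fun t : ℝ => (Q {a | t ≤ φ a}).toReal := by
    refine Measurable.ennreal_toReal (Antitone.measurable fun s t hst => ?_)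
    exact measure_mono fun a ha => le_trans hst ha
  have measP : Measurable fun t : ℝ => (P {a | t ≤ φ a}).toReal := by
    refine Measurable.ennreal_toReal (Antitone.measurable fun s t hst => ?_)
    exact measure_mono fun a ha => le_trans hst ha
  have intQ : IntegrableOn (fun t : ℝ => (Q {a | t ≤ φ a}).toReal) (Ioc 0 1) := by
    refine Integrable.mono' (integrable_const 1) measQ.aestronglyMeasurable ?_
    refine Eventually.of_forall fun t => ?_
    rw [Real.norm_eq_abs, abs_of_nonneg ENNReal.toReal_nonneg]
    exact le_trans (ENNReal.toReal_mono ENNReal.one_ne_top (prob_le_one (μ := Q))) (by simp)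
  have intP : IntegrableOn (fun t : ℝ => (P {a | t ≤ φ a}).toReal) (Ioc 0 1) := by
    refine Integrable.mono' (integrable_const 1) measP.aestronglyMeasurable ?_
    refine Eventually.of_forall fun t => ?_
    rw [Real.norm_eq_abs, abs_of_nonneg ENNReal.toReal_nonneg]
    exact le_trans (ENNReal.toReal_mono ENNReal.one_ne_top (prob_le_one (μ := P))) (by simp)
  rw [hQ, hP]
  calc (∫ t in Ioc (0:ℝ) 1, (Q {a | t ≤ φ a}).toReal)
      ≤ ∫ t in Ioc (0:ℝ) 1, (c * (P {a | t ≤ φ a}).toReal + δ) := by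
        refine setIntegral_mono_on intQ ((intP.const_mul c).add ((integrableOn_const_iff).mpr
          (Or.inr (by simp)))) measurableSet_Ioc fun t _ => ?_
        exact h _ (measurableSet_le measurable_const hφm)
    _ = c * (∫ t in Ioc (0:ℝ) 1, (P {a | t ≤ φ a}).toReal) + δ := by
        rw [integral_add (intP.const_mul c) ((integrableOn_const_iff).mpr (Or.inr (by simp)))]
        rw [MeasureTheory.integral_const_mul, setIntegral_const]
        simp

lemma prob_toReal_mem {Ω : Type*} [MeasurableSpace Ω] (P : Measure Ω)
    [IsProbabilityMeasure P] (E : Set Ω) : (P E).toReal ∈ Icc (0:ℝ) 1 :=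
  ⟨ENNReal.toReal_nonneg,
    le_trans (ENNReal.toReal_mono ENNReal.one_ne_top (prob_le_one (μ := P))) (by simp)⟩

lemma delta_eq (μ ε : ℝ) (hμ : 0 < μ) :
    stdNormCDF (-ε / μ + μ / 2) - Real.exp ε * stdNormCDF (-ε / μ - μ / 2)
      = stdNormCDF (μ - (ε/μ + μ/2)) - Real.exp ε * stdNormCDF (-(ε/μ + μ/2)) := by
  rw [show -ε / μ + μ / 2 = μ - (ε/μ + μ/2) by ring, show -ε / μ - μ / 2 = -(ε/μ + μ/2) by ring]

lemma one_sub_Gmu_le (μ ε α : ℝ) (hμ : 0 < μ) (hε : 0 ≤ ε) (hα : α ∈ Icc (0:ℝ) 1) :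
    1 - Gmu μ α ≤ Real.exp ε * α +
      (stdNormCDF (-ε / μ + μ / 2) - Real.exp ε * stdNormCDF (-ε / μ - μ / 2)) := by
  rw [delta_eq μ ε hμ]
  have hδ := delta_nonneg μ ε hμ
  by_cases h0 : α ≤ 0
  · have : α = 0 := le_antisymm h0 hα.1
    subst this
    rw [Gmu, if_pos le_rfl]
    simpa using hδ
  by_cases h1 : (1:ℝ) ≤ α
  · have : α = 1 := le_antisymm hα.2 h1
    subst this
    rw [Gmu, if_neg h0, if_pos le_rfl]
    have := Real.one_le_exp hε
    nlinarith
  · push_neg at h0 h1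
    rw [Gmu, if_neg (not_le.mpr h0), if_neg (not_le.mpr h1)]
    set t := stdNormCDFInv (1 - α) with htdef
    have ht : stdNormCDF t = 1 - α := Phi_inv_spec (by linarith) (by linarith)
    have h2 : stdNormCDF (-t) = α := by rw [Phi_neg, ht]; ring
    have h3 : stdNormCDF (μ - t) = 1 - stdNormCDF (t - μ) := by
      rw [show μ - t = -(t - μ) by ring, Phi_neg]
    have := key_max μ ε t hμ
    rw [h2, h3] at this
    linarith

lemma tradeoff_le_of_set {Ω : Type*} [MeasurableSpace Ω] (P Q : Measure Ω)
    [IsProbabilityMeasure P] [IsProbabilityMeasure Q] {E : Set Ω} (hE : MeasurableSet E)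
    {α : ℝ} (hα : (P E).toReal ≤ α) : tradeoff P Q α ≤ 1 - (Q E).toReal := by
  have hbdd : BddBelow { β : ℝ | ∃ φ : Ω → ℝ, Measurable φ ∧ (∀ ω, φ ω ∈ Icc (0:ℝ) 1) ∧
      (∫ ω, φ ω ∂P) ≤ α ∧ β = 1 - ∫ ω, φ ω ∂Q } := by
    refine ⟨0, ?_⟩
    rintro β ⟨φ, hφm, hφr, -, rfl⟩
    have := (test_integral_mem Q hφm hφr).2
    linarith
  refine csInf_le hbdd ?_
  refine ⟨E.indicator (fun _ => 1), measurable_const.indicator hE, ?_, ?_, ?_⟩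
  · intro ω
    by_cases h : ω ∈ E <;> simp [indicator, h]
  · rw [integral_indicator_const (1:ℝ) hE]
    simpa [measureReal_def] using hα
  · rw [integral_indicator_const (1:ℝ) hE]
    simp [measureReal_def]

lemma integral_one_sub {Ω : Type*} [MeasurableSpace Ω] (P : Measure Ω)
    [IsProbabilityMeasure P] {φ : Ω → ℝ} (hφm : Measurable φ)
    (hφr : ∀ ω, φ ω ∈ Icc (0:ℝ) 1) :
    (∫ ω, 1 - φ ω ∂P) = 1 - ∫ ω, φ ω ∂P := by
  rw [integral_sub (integrable_const 1) (test_integrable P hφm hφr)]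
  simp

end Aux

/-- A mechanism is `μ`-GDP if and only if it is `(ε, δ(ε))`-DP for every `ε ≥ 0`, where
`δ(ε) = Φ(-ε/μ + μ/2) - e^ε Φ(-ε/μ - μ/2)`. -/
theorem statement10 {X Ω : Type*} [MeasurableSpace Ω] (Neighbor : X → X → Prop)
    (hN : Symmetric Neighbor) (M : X → Measure Ω) (hM : ∀ S, IsProbabilityMeasure (M S))
    (μ : ℝ) (hμ : 0 < μ) :
    (∀ S S', Neighbor S S' → ∀ α ∈ Icc (0:ℝ) 1, Gmu μ α ≤ tradeoff (M S) (M S') α) ↔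
      (∀ ε : ℝ, 0 ≤ ε → ∀ S S', Neighbor S S' → ∀ E : Set Ω, MeasurableSet E →
        (M S E).toReal ≤ Real.exp ε * (M S' E).toReal +
          (stdNormCDF (-ε / μ + μ / 2) - Real.exp ε * stdNormCDF (-ε / μ - μ / 2))) := by
  constructor
  · intro hGDP ε hε S S' hSS' E hE
    haveI := hM S; haveI := hM S'
    have hα := prob_toReal_mem (M S') E
    have h1 := hGDP S' S (hN hSS') _ hα
    have h2 := tradeoff_le_of_set (M S') (M S) hE (le_refl ((M S' E).toReal))
    have h3 := one_sub_Gmu_le μ ε ((M S' E).toReal) hμ hε hα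
    linarith
  · intro hDP S S' hSS' α hα
    haveI := hM S; haveI := hM S'
    refine le_csInf ⟨1, fun _ => 0, measurable_const,
      fun ω => ⟨le_rfl, zero_le_one⟩, by simpa using hα.1, by simp⟩ ?_
    rintro β ⟨φ, hφm, hφr, hφP, rfl⟩
    set D : ℝ → ℝ := fun ε => stdNormCDF (-ε / μ + μ / 2) -
      Real.exp ε * stdNormCDF (-ε / μ - μ / 2) with hD
    have key1 : ∀ ε : ℝ, 0 ≤ ε →
        1 - Real.exp ε * α - D ε ≤ 1 - ∫ ω, φ ω ∂(M S') := by
      intro ε hε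
      have h := test_dp (M S) (M S') hφm hφr (Real.exp_nonneg ε)
        (fun E hE => hDP ε hε S' S (hN hSS') E hE)
      have h2 : Real.exp ε * (∫ ω, φ ω ∂(M S)) ≤ Real.exp ε * α :=
        mul_le_mul_of_nonneg_left hφP (Real.exp_nonneg ε)
      simp only [hD]
      linarith
    have key2 : ∀ ε : ℝ, 0 ≤ ε →
        1 - α ≤ Real.exp ε * (1 - ∫ ω, φ ω ∂(M S')) + D ε := by
      intro ε hε
      have hψm : Measurable (fun ω => 1 - φ ω) := measurable_const.sub hφm
      have hψr : ∀ ω, (1 - φ ω) ∈ Icc (0:ℝ) 1 :=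
        fun ω => ⟨by linarith [(hφr ω).2], by linarith [(hφr ω).1]⟩
      have h := test_dp (M S') (M S) hψm hψr (Real.exp_nonneg ε)
        (fun E hE => hDP ε hε S S' hSS' E hE)
      rw [integral_one_sub (M S) hφm hφr, integral_one_sub (M S') hφm hφr] at h
      simp only [hD]
      linarith
    by_cases h0 : α ≤ 0
    · have hα0 : α = 0 := le_antisymm h0 hα.1
      subst hα0
      rw [Gmu, if_pos le_rfl]
      have hub : ∀ ε : ℝ, 0 ≤ ε →
          1 - stdNormCDF (-ε / μ + μ / 2) ≤ 1 - ∫ ω, φ ω ∂(M S') := by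
        intro ε hε
        have h := key1 ε hε
        have h2 : 0 ≤ Real.exp ε * stdNormCDF (-ε / μ - μ / 2) :=
          mul_nonneg (Real.exp_nonneg ε) (Phi_nonneg _)
        simp only [hD, mul_zero] at h
        linarith
      have hlim : Filter.Tendsto (fun ε : ℝ => 1 - stdNormCDF (-ε / μ + μ / 2))
          Filter.atTop (nhds 1) := by
        have hdiv : Filter.Tendsto (fun ε : ℝ => ε / μ) Filter.atTop Filter.atTop :=
          Filter.tendsto_id.atTop_div_const hμ
        have hneg : Filter.Tendsto (fun ε : ℝ => -ε / μ) Filter.atTop Filter.atBot := by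
          simp only [neg_div]
          exact Filter.tendsto_neg_atTop_atBot.comp hdiv
        have harg : Filter.Tendsto (fun ε : ℝ => -ε / μ + μ / 2)
            Filter.atTop Filter.atBot := Filter.tendsto_atBot_add_const_right _ _ hneg
        have := Phi_tendsto_atBot.comp harg
        have h2 := (tendsto_const_nhds (x := (1:ℝ)) (f := Filter.atTop)).sub this
        simpa using h2
      refine le_of_tendsto hlim ?_
      filter_upwards [Filter.eventually_ge_atTop (0:ℝ)] with ε hε using hub ε hε
    by_cases h1 : (1:ℝ) ≤ α
    · rw [Gmu, if_neg h0, if_pos h1]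
      have := (test_integral_mem (M S') hφm hφr).2
      linarith
    · push_neg at h0 h1
      rw [Gmu, if_neg (not_le.mpr h0), if_neg (not_le.mpr h1)]
      set t := stdNormCDFInv (1 - α) with htdef
      have ht : stdNormCDF t = 1 - α := Phi_inv_spec (by linarith) (by linarith)
      have hnt : stdNormCDF (-t) = α := by rw [Phi_neg, ht]; ring
      rcases le_total (μ/2) t with hcase | hcase
      · set ε := μ * t - μ^2/2 with hεdef
        have hε : 0 ≤ ε := by rw [hεdef]; nlinarith
        have hA : -ε / μ + μ / 2 = μ - t := by field_simp; ring
        have hB : -ε / μ - μ / 2 = -t := by field_simp; ring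
        have h := key1 ε hε
        simp only [hD] at h
        simp only [hA, hB, hnt] at h
        have hmt : stdNormCDF (t - μ) = 1 - stdNormCDF (μ - t) := by
          rw [show t - μ = -(μ - t) by ring, Phi_neg]
        linarith
      · set ε := μ^2/2 - μ * t with hεdef
        have hε : 0 ≤ ε := by rw [hεdef]; nlinarith
        have hA : -ε / μ + μ / 2 = t := by field_simp; ring
        have hB : -ε / μ - μ / 2 = t - μ := by field_simp; ring
        have h := key2 ε hε
        simp only [hD] at h
        simp only [hA, hB, ht] at h
        have h2 : Real.exp ε * stdNormCDF (t - μ) ≤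
            Real.exp ε * (1 - ∫ ω, φ ω ∂(M S')) := by linarith
        exact le_of_mul_le_mul_left h2 (Real.exp_pos ε)
end
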